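/- The model class Q_R = { 𝔄 : 𝔄 ≅ (M, ∈, a) for some transitive set M and a ∈ M with |a| ≥ ℵ₁ } is Σ(L(Q₁,W))-definable: it is the class of reducts to (E, c) of two-sorted structures (A, B, E, c, <, F) where E is extensional, < well-orders B (expressed via the quantifier W), F : (A,E) → (B,<) is order-preserving (a rank function witnessing well-foundedness of E), and Q₁x (x E c) holds. -/

import Mathlib

open Cardinal

/-- `E` is extensional. -/
def Extensional {A : Type*} (E : A → A → Prop) : Prop :=
  ∀ x y : A, (∀ z, E z x ↔ E z y) → x = y

/-- `(A, E, c)` is isomorphic to `(M, ∈, a)` for a transitive set `M` and `a ∈ M`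
with `|a| ≥ ℵ₁` : this is the model class `Q_R` for `R = R_{ℵ₁}`. -/
def InQR (A : Type 1) (E : A → A → Prop) (c : A) : Prop :=
  ∃ (M a : ZFSet.{0}), M.IsTransitive ∧ a ∈ M ∧ aleph 1 ≤ #↥a.toSet ∧
    ∃ e : A ≃ ↥M.toSet, (∀ x y : A, E x y ↔ ((e x : ZFSet) ∈ (e y : ZFSet))) ∧
      (e c : ZFSet) = a

section Collapse

variable {A : Type 1} [Small.{0} A] {E : A → A → Prop} (wf : WellFounded E)

/-- Mostowski collapse of a well-founded relation into `ZFSet`. -/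
noncomputable def collapse : A → ZFSet.{0} :=
  wf.fix fun x IH =>
    ZFSet.range fun y : Shrink.{0} {y // E y x} =>
      IH ((equivShrink _).symm y).1 ((equivShrink _).symm y).2

theorem mem_collapse {z : ZFSet.{0}} {x : A} :
    z ∈ collapse wf x ↔ ∃ y, E y x ∧ collapse wf y = z := by
  rw [collapse, wf.fix_eq, ZFSet.mem_range]
  constructor
  · rintro ⟨y, rfl⟩
    exact ⟨_, ((equivShrink _).symm y).2, rfl⟩
  · rintro ⟨y, hy, rfl⟩
    refine ⟨equivShrink _ ⟨y, hy⟩, ?_⟩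
    have h2 : ((equivShrink {y // E y x}).symm ((equivShrink _) ⟨y, hy⟩)) = ⟨y, hy⟩ :=
      Equiv.symm_apply_apply _ _
    beta_reduce
    rw [h2]

theorem collapse_injective (hext : Extensional E) :
    Function.Injective (collapse wf) := by
  intro x
  induction x using wf.induction with
  | _ x IH =>
    intro y hxy
    apply hext
    intro z
    constructor
    · intro hz
      have : collapse wf z ∈ collapse wf y := by
        rw [← hxy]; exact (mem_collapse wf).2 ⟨z, hz, rfl⟩
      obtain ⟨w, hw, hwz⟩ := (mem_collapse wf).1 this
      exact (IH z hz hwz.symm) ▸ hw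
    · intro hz
      have : collapse wf z ∈ collapse wf x := by
        rw [hxy]; exact (mem_collapse wf).2 ⟨z, hz, rfl⟩
      obtain ⟨w, hw, hwz⟩ := (mem_collapse wf).1 this
      exact (IH w hw hwz) ▸ hw

end Collapse

/-- The model class `Q_R` is `Σ(L(Q₁,W))`-definable: it is the class of
reducts to `(E, c)` of two-sorted structures `(A, B, E, c, <, F)` in which `E` is
extensional, `<` well-orders `B` (expressible by the quantifier `W`), `F : (A,E) → (B,<)`
is order preserving (a rank function witnessing well-foundedness of `E`), and
`Q₁x (x E c)` holds (i.e. `c` has uncountably many `E`-predecessors). -/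
theorem stmt13 (A : Type 1) [Small.{0} A] (E : A → A → Prop) (c : A) :
    InQR A E c ↔
      ∃ (B : Type 1) (lt : B → B → Prop) (F : A → B),
        Extensional E ∧ IsWellOrder B lt ∧
        (∀ x y : A, E x y → lt (F x) (F y)) ∧
        aleph 1 ≤ #{x : A // E x c} := by
  constructor
  · rintro ⟨M, a, hM, haM, hcard, e, hE, hec⟩
    refine ⟨Ordinal.{0}, (· < ·), fun x => ZFSet.rank (e x), ?_, inferInstance,
      fun x y h => ZFSet.rank_lt_of_mem ((hE x y).1 h), ?_⟩
    · -- extensionality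
      intro x y hxy
      have : (e x : ZFSet) = (e y : ZFSet) := by
        apply ZFSet.ext
        intro z
        constructor
        · intro hz
          have hzM : z ∈ M := hM.mem_trans hz (e x).2
          have : E (e.symm ⟨z, hzM⟩) x := by
            rw [hE]; simpa using hz
          have := (hxy _).1 this
          rw [hE] at this; simpa using this
        · intro hz
          have hzM : z ∈ M := hM.mem_trans hz (e y).2
          have : E (e.symm ⟨z, hzM⟩) y := by
            rw [hE]; simpa using hz
          have := (hxy _).2 this
          rw [hE] at this; simpa using this
      exact e.injective (Subtype.ext this)
    · -- cardinality
      refine hcard.trans (le_of_eq (Cardinal.mk_congr ?_))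
      refine Equiv.symm (Equiv.ofBijective
        (fun x => ⟨(e x.1 : ZFSet), by
          have := (hE x.1 c).1 x.2
          rwa [hec] at this⟩) ⟨?_, ?_⟩)
      · intro x y hxy
        dsimp only at hxy
        rw [Subtype.mk.injEq] at hxy
        exact Subtype.ext (e.injective (Subtype.ext hxy))
      · rintro ⟨z, hz⟩
        have hzM : z ∈ M := hM.mem_trans hz haM
        refine ⟨⟨e.symm ⟨z, hzM⟩, ?_⟩, ?_⟩
        · rw [hE, hec]; simp only [Equiv.apply_symm_apply]; exact hz
        · simp
  · rintro ⟨B, lt, F, hext, hwo, hF, hcard⟩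
    have wf : WellFounded E := by
      have : Subrelation E (InvImage lt F) := fun {x y} h => hF x y h
      exact this.wf (InvImage.wf F hwo.wf)
    set g := collapse wf with hg
    have hinj : Function.Injective g := collapse_injective wf hext
    set M : ZFSet.{0} := ZFSet.range fun x : Shrink.{0} A => g ((equivShrink A).symm x)
      with hMdef
    have hmemM : ∀ z : ZFSet, z ∈ M ↔ ∃ x : A, g x = z := by
      intro z
      rw [hMdef, ZFSet.mem_range]
      constructor
      · rintro ⟨x, rfl⟩; exact ⟨_, rfl⟩
      · rintro ⟨x, rfl⟩; exact ⟨equivShrink A x, by simp⟩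
    have hMtrans : M.IsTransitive := by
      intro y hy z hz
      obtain ⟨x, rfl⟩ := (hmemM y).1 hy
      obtain ⟨w, hw, rfl⟩ := (mem_collapse wf).1 hz
      exact (hmemM _).2 ⟨w, rfl⟩
    refine ⟨M, g c, hMtrans, (hmemM _).2 ⟨c, rfl⟩, ?_, ?_⟩
    · -- cardinality of (g c).toSet
      refine hcard.trans (le_of_eq (Cardinal.mk_congr ?_))
      refine Equiv.ofBijective (fun x => ⟨g x.1, (mem_collapse wf).2 ⟨x.1, x.2, rfl⟩⟩)
        ⟨?_, ?_⟩
      · intro x y hxy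
        exact Subtype.ext (hinj (congrArg Subtype.val hxy))
      · rintro ⟨z, hz⟩
        obtain ⟨y, hy, rfl⟩ := (mem_collapse wf).1 hz
        exact ⟨⟨y, hy⟩, rfl⟩
    · -- the isomorphism
      refine ⟨Equiv.ofBijective (fun x => ⟨g x, (hmemM _).2 ⟨x, rfl⟩⟩) ⟨?_, ?_⟩, ?_, ?_⟩
      · intro x y hxy
        exact hinj (congrArg Subtype.val hxy)
      · rintro ⟨z, hz⟩
        obtain ⟨x, rfl⟩ := (hmemM z).1 hz
        exact ⟨x, rfl⟩
      · intro x y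
        change E x y ↔ g x ∈ g y
        constructor
        · intro h
          exact (mem_collapse wf).2 ⟨x, h, rfl⟩
        · intro h
          obtain ⟨w, hw, hwx⟩ := (mem_collapse wf).1 h
          rwa [← hinj hwx]
      · rfl
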